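/- If T is consistent and there exists a Σ3 sentence σ that is T-provable but false in ℕ, then T has a false Gödelian sentence of complexity Σ3 (even if T is ω-consistent). -/

import Mathlib

/-- An abstract propositional-logical syntax for sentences of arithmetic. -/
structure PropLang where
  Sent : Type
  falsum : Sent
  neg : Sent → Sent
  imp : Sent → Sent → Sent
  conj : Sent → Sent → Sent
  disj : Sent → Sent → Sent
  iffS : Sent → Sent → Sent

namespace PropLang

/-- A valuation (e.g. truth in the standard model ℕ) commuting with the connectives. -/
def IsValuation (L : PropLang) (v : L.Sent → Prop) : Prop :=
  (¬ v L.falsum) ∧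
  (∀ a, v (L.neg a) ↔ ¬ v a) ∧
  (∀ a b, v (L.imp a b) ↔ (v a → v b)) ∧
  (∀ a b, v (L.conj a b) ↔ (v a ∧ v b)) ∧
  (∀ a b, v (L.disj a b) ↔ (v a ∨ v b)) ∧
  (∀ a b, v (L.iffS a b) ↔ (v a ↔ v b))

/-- Propositional tautologies: sentences true under every valuation. -/
def Taut (L : PropLang) (s : L.Sent) : Prop :=
  ∀ v : L.Sent → Prop, L.IsValuation v → v s

end PropLang

/-- A (recursively axiomatized) theory together with its provability
predicate `Pr`; `Pr σ` denotes the sentence `Pr_T(#σ)`. -/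
structure TheoryOn (L : PropLang) where
  Prv : L.Sent → Prop
  Pr : L.Sent → L.Sent

namespace TheoryOn

variable {L : PropLang}

/-- `T` is closed under classical propositional logic. -/
def ClosedUnderLogic (T : TheoryOn L) : Prop :=
  (∀ s, L.Taut s → T.Prv s) ∧
  (∀ a b, T.Prv (L.imp a b) → T.Prv a → T.Prv b)

/-- Consistency of `T`. -/
def Consistent (T : TheoryOn L) : Prop :=
  ¬ ∃ s, T.Prv s ∧ T.Prv (L.neg s)

/-- Soundness of `T` with respect to truth in the standard model. -/
def Sound (T : TheoryOn L) (TrN : L.Sent → Prop) : Prop :=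
  ∀ s, T.Prv s → TrN s

/-- `γ` is a Gödelian sentence of `T`: `T ⊢ γ ↔ ¬Pr_T(#γ)`. -/
def Godelian (T : TheoryOn L) (γ : L.Sent) : Prop :=
  T.Prv (L.iffS γ (L.neg (T.Pr γ)))

/-- The Hilbert–Bernays–Löb derivability conditions for `Pr_T`. -/
def HBL (T : TheoryOn L) : Prop :=
  (∀ s, T.Prv s → T.Prv (T.Pr s)) ∧
  (∀ a b, T.Prv (L.imp (T.Pr (L.imp a b)) (L.imp (T.Pr a) (T.Pr b)))) ∧
  (∀ s, T.Prv (L.imp (T.Pr s) (T.Pr (T.Pr s))))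

/-- `Pr_T` is a standard provability predicate:
`ℕ ⊨ Pr_T(#σ)` iff `T ⊢ σ`. -/
def PrStandard (T : TheoryOn L) (TrN : L.Sent → Prop) : Prop :=
  ∀ s, TrN (T.Pr s) ↔ T.Prv s

end TheoryOn

/-! If `T ⊢ σ`, then `σ ∧ γ₀` and `γ₀` are `T`-provably equivalent, and by the first two
derivability conditions so are `Pr_T(#(σ ∧ γ₀))` and `Pr_T(#γ₀)`; hence `σ ∧ γ₀` inherits the
fixed-point equation of `γ₀`. It is false in ℕ because `σ` is. -/

namespace PropLang.IsValuation

variable {L : PropLang} {v : L.Sent → Prop}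

theorem neg (hv : L.IsValuation v) (a : L.Sent) : v (L.neg a) ↔ ¬ v a := hv.2.1 a

theorem imp (hv : L.IsValuation v) (a b : L.Sent) : v (L.imp a b) ↔ (v a → v b) :=
  hv.2.2.1 a b

theorem conj (hv : L.IsValuation v) (a b : L.Sent) : v (L.conj a b) ↔ (v a ∧ v b) :=
  hv.2.2.2.1 a b

theorem iff (hv : L.IsValuation v) (a b : L.Sent) : v (L.iffS a b) ↔ (v a ↔ v b) :=
  hv.2.2.2.2.2 a b

end PropLang.IsValuation

namespace TheoryOn

variable {L : PropLang} {T : TheoryOn L}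

theorem ClosedUnderLogic.prv_of_taut (hT : T.ClosedUnderLogic) {s : L.Sent} (hs : L.Taut s) :
    T.Prv s :=
  hT.1 s hs

theorem ClosedUnderLogic.mp (hT : T.ClosedUnderLogic) {a b : L.Sent}
    (hab : T.Prv (L.imp a b)) (ha : T.Prv a) : T.Prv b :=
  hT.2 a b hab ha

theorem HBL.prv_imp_pr_pr (hHBL : T.HBL) (hT : T.ClosedUnderLogic) {a b : L.Sent}
    (hab : T.Prv (L.imp a b)) : T.Prv (L.imp (T.Pr a) (T.Pr b)) :=
  hT.mp (hHBL.2.1 a b) (hHBL.1 _ hab)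

theorem Godelian.of_prv_imp_of_prv_imp (hT : T.ClosedUnderLogic) (hHBL : T.HBL)
    {γ δ : L.Sent} (hγ : T.Godelian γ) (hγδ : T.Prv (L.imp γ δ)) (hδγ : T.Prv (L.imp δ γ)) :
    T.Godelian δ := by
  have hTaut : L.Taut (L.imp (L.imp γ δ) (L.imp (L.imp δ γ)
      (L.imp (L.imp (T.Pr γ) (T.Pr δ)) (L.imp (L.imp (T.Pr δ) (T.Pr γ))
      (L.imp (L.iffS γ (L.neg (T.Pr γ))) (L.iffS δ (L.neg (T.Pr δ)))))))) := by
    intro v hv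
    simp only [hv.imp, hv.iff, hv.neg]
    tauto
  exact hT.mp (hT.mp (hT.mp (hT.mp (hT.mp (hT.prv_of_taut hTaut) hγδ) hδγ)
    (hHBL.prv_imp_pr_pr hT hγδ)) (hHBL.prv_imp_pr_pr hT hδγ)) hγ

theorem Godelian.conj_of_prv (hT : T.ClosedUnderLogic) (hHBL : T.HBL) {γ σ : L.Sent}
    (hγ : T.Godelian γ) (hσ : T.Prv σ) : T.Godelian (L.conj σ γ) := by
  have hTaut₁ : L.Taut (L.imp σ (L.imp γ (L.conj σ γ))) := by
    intro v hv
    simp only [hv.imp, hv.conj]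
    tauto
  have hTaut₂ : L.Taut (L.imp (L.conj σ γ) γ) := by
    intro v hv
    simp only [hv.imp, hv.conj]
    tauto
  exact hγ.of_prv_imp_of_prv_imp hT hHBL (hT.mp (hT.prv_of_taut hTaut₁) hσ)
    (hT.prv_of_taut hTaut₂)

end TheoryOn

theorem false_sigma3_godelian_general (L : PropLang) (TrN : L.Sent → Prop)
    (hTrN : L.IsValuation TrN) (T : TheoryOn L)
    (hLog : T.ClosedUnderLogic) (hHBL : T.HBL)
    (Pi1 Sigma3 : L.Sent → Prop)
    (hConjSigma3 : ∀ a b, Sigma3 a → Pi1 b → Sigma3 (L.conj a b))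
    (hDiag : ∃ γ₀, T.Godelian γ₀ ∧ Pi1 γ₀)
    (σ : L.Sent) (hσSigma3 : Sigma3 σ) (hσProv : T.Prv σ) (hσFalse : ¬ TrN σ) :
    ∃ γ, T.Godelian γ ∧ Sigma3 γ ∧ ¬ TrN γ := by
  obtain ⟨γ₀, hγ₀, hγ₀Pi1⟩ := hDiag
  refine ⟨L.conj σ γ₀, hγ₀.conj_of_prv hLog hHBL hσProv, hConjSigma3 _ _ hσSigma3 hγ₀Pi1, ?_⟩
  rw [hTrN.conj]
  exact fun h => hσFalse h.1

/-- If `T` is consistent and some Σ₃ sentence `σ` is `T`-provable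
but false in ℕ, then `T` has a false Gödelian sentence of complexity Σ₃. -/
theorem false_sigma3_godelian (L : PropLang) (TrN : L.Sent → Prop)
    (hTrN : L.IsValuation TrN) (T : TheoryOn L)
    (hLog : T.ClosedUnderLogic) (hHBL : T.HBL) (hCons : T.Consistent)
    (Pi1 Sigma3 : L.Sent → Prop)
    (hConjSigma3 : ∀ a b, Sigma3 a → Pi1 b → Sigma3 (L.conj a b))
    (hDiag : ∃ γ₀, T.Godelian γ₀ ∧ Pi1 γ₀)
    (σ : L.Sent) (hσSigma3 : Sigma3 σ) (hσProv : T.Prv σ) (hσFalse : ¬ TrN σ) :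
    ∃ γ, T.Godelian γ ∧ Sigma3 γ ∧ ¬ TrN γ :=
  false_sigma3_godelian_general L TrN hTrN T hLog hHBL Pi1 Sigma3 hConjSigma3 hDiag σ hσSigma3
    hσProv hσFalse
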